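/- For every p ∈ (1,2) and every positive integer n, the second derivative of Φ_n satisfies 0 ≤ Φ_n''(s) ≤ 2 p n^{2−p} for all s ∈ ℝ; in particular Φ_n is convex. -/

import Mathlib

/-!
Rescaling gives `Φ_n(s) = n^{-p} Φ_1(n s)`, hence `Φ_n''(s) = n^{2-p} Φ_1''(n s)`, so it
suffices to treat `n = 1`. There `Φ_1` glues `|t|^p` to a quartic along `|t| = 1`; the two
pieces agree there together with their first and second derivatives, so `Φ_1` is `C²` with
`Φ_1'' = p(p-1)|t|^{p-2}` for `|t| > 1` and `Φ_1'' = p(p-2)(3t²-1)/2 + p` for `|t| ≤ 1`.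
For `1 ≤ p ≤ 2` both expressions lie in `[0, 2p]`.
-/

/-- The `C²` regularization of `s ↦ |s|^p` from the proof of Lemma 3.2. -/
noncomputable def Phi (p : ℝ) (n : ℕ) (s : ℝ) : ℝ :=
  if 1 / (n : ℝ) < |s| then |s| ^ p
  else p * (p - 2) / (8 * (n : ℝ) ^ p) * ((n : ℝ) ^ 2 * s ^ 2 - 1) ^ 2
      + p / (2 * (n : ℝ) ^ p) * ((n : ℝ) ^ 2 * s ^ 2 - 1) + 1 / (n : ℝ) ^ p

open Set Filter Topology Real

theorem HasDerivAt.of_nhdsLE_of_nhdsGE {f g h : ℝ → ℝ} {a d : ℝ}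
    (hg : HasDerivAt g d a) (hh : HasDerivAt h d a)
    (hfg : f =ᶠ[𝓝[≤] a] g) (hfh : f =ᶠ[𝓝[≥] a] h) : HasDerivAt f d a := by
  have hl := hg.hasDerivWithinAt.congr_of_eventuallyEq hfg (hfg.eq_of_nhdsWithin self_mem_Iic)
  have hr := hh.hasDerivWithinAt.congr_of_eventuallyEq hfh (hfh.eq_of_nhdsWithin self_mem_Ici)
  simpa [Iic_union_Ici] using hl.union hr

theorem hasDerivAt_of_abs_le_of_le_abs {f g h f' : ℝ → ℝ} {c : ℝ} (hc : 0 < c)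
    (hfg : ∀ t, |t| ≤ c → f t = g t) (hfh : ∀ t, c ≤ |t| → f t = h t)
    (hg : ∀ t, |t| ≤ c → HasDerivAt g (f' t) t)
    (hh : ∀ t, c ≤ |t| → HasDerivAt h (f' t) t) (s : ℝ) : HasDerivAt f (f' s) s := by
  rcases lt_trichotomy |s| c with hs | hs | hs
  · refine (hg s hs.le).congr_of_eventuallyEq ?_
    filter_upwards [(isOpen_lt continuous_abs continuous_const).mem_nhds hs] with t ht
    exact hfg t ht.le
  · rcases (abs_eq hc.le).mp hs with rfl | rfl
    · refine .of_nhdsLE_of_nhdsGE (hg _ hs.le) (hh _ hs.ge) ?_ ?_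
      · filter_upwards [self_mem_nhdsWithin,
          nhdsWithin_le_nhds (eventually_gt_nhds (neg_lt_self hc))] with t ht₁ ht₂
        exact hfg t (abs_le.mpr ⟨ht₂.le, ht₁⟩)
      · filter_upwards [self_mem_nhdsWithin] with t ht
        exact hfh t (ht.trans (le_abs_self t))
    · refine .of_nhdsLE_of_nhdsGE (hh _ hs.ge) (hg _ hs.le) ?_ ?_
      · filter_upwards [self_mem_nhdsWithin] with t ht
        exact hfh t ((le_neg.mp ht).trans (neg_le_abs t))
      · filter_upwards [self_mem_nhdsWithin,
          nhdsWithin_le_nhds (eventually_lt_nhds (neg_lt_self hc))] with t ht₁ ht₂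
        exact hfg t (abs_le.mpr ⟨ht₁, ht₂.le⟩)
  · refine (hh s hs.le).congr_of_eventuallyEq ?_
    filter_upwards [(isOpen_lt continuous_const continuous_abs).mem_nhds hs] with t ht
    exact hfh t ht.le

theorem hasDerivAt_ite_lt_abs {g h g' h' : ℝ → ℝ} {c : ℝ} (hc : 0 < c)
    (hgh : ∀ t, |t| = c → g t = h t) (hgh' : ∀ t, |t| = c → g' t = h' t)
    (hg : ∀ t, |t| ≤ c → HasDerivAt g (g' t) t)
    (hh : ∀ t, c ≤ |t| → HasDerivAt h (h' t) t) (s : ℝ) :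
    HasDerivAt (fun t => if c < |t| then h t else g t) (if c < |s| then h' s else g' s) s := by
  have ite_eq_of_le_abs {u v : ℝ → ℝ} (huv : ∀ t, |t| = c → u t = v t) (t : ℝ)
      (ht : c ≤ |t|) : (if c < |t| then v t else u t) = v t := by
    rcases ht.lt_or_eq with ht | ht
    · exact if_pos ht
    · rw [if_neg (not_lt.mpr ht.ge), huv t ht.symm]
  refine hasDerivAt_of_abs_le_of_le_abs hc (g := g) (h := h)
    (f' := fun t => if c < |t| then h' t else g' t) (fun t ht => if_neg (not_lt.mpr ht))
    (ite_eq_of_le_abs hgh) (fun t ht => ?_) (fun t ht => ?_) s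
  · simpa only [if_neg (not_lt.mpr ht)] using hg t ht
  · simpa only [ite_eq_of_le_abs hgh' t ht] using hh t ht

theorem hasDerivAt_abs_rpow_mul_self (q : ℝ) {t : ℝ} (ht : t ≠ 0) :
    HasDerivAt (fun x => |x| ^ q * x) ((q + 1) * |t| ^ q) t := by
  refine (((hasDerivAt_abs ht).rpow_const (p := q) (Or.inl (abs_ne_zero.mpr ht))).mul
    (hasDerivAt_id t)).congr_deriv ?_
  rw [rpow_sub_one (abs_ne_zero.mpr ht), id]
  have hsign : (SignType.sign t : ℝ) * t = |t| := sign_mul_self t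
  field_simp
  linear_combination q * hsign

theorem HasDerivAt.const_mul_comp_const_mul {g : ℝ → ℝ} {g' a b s : ℝ}
    (hg : HasDerivAt g g' (b * s)) :
    HasDerivAt (fun x => a * g (b * x)) (a * b * g') s :=
  ((hg.comp s ((hasDerivAt_id s).const_mul b)).const_mul a).congr_deriv (by ring)

theorem sq_eq_one_of_abs_eq_one {t : ℝ} (ht : |t| = 1) : t ^ 2 = 1 := by
  rw [← sq_abs, ht, one_pow]

noncomputable def PhiOneDeriv (p t : ℝ) : ℝ :=
  if 1 < |t| then p * |t| ^ (p - 2) * t else p * (p - 2) / 2 * (t ^ 2 - 1) * t + p * t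

noncomputable def PhiOneDeriv2 (p t : ℝ) : ℝ :=
  if 1 < |t| then p * (p - 1) * |t| ^ (p - 2) else p * (p - 2) / 2 * (3 * t ^ 2 - 1) + p

theorem Phi_one (p : ℝ) : Phi p 1 = fun t => if 1 < |t| then |t| ^ p
    else p * (p - 2) / 8 * (t ^ 2 - 1) ^ 2 + p / 2 * (t ^ 2 - 1) + 1 := by
  funext t
  simp [Phi]

theorem Phi_eq_comp_mul {n : ℕ} (hn : 0 < n) (p : ℝ) :
    Phi p n = fun s => ((n : ℝ) ^ p)⁻¹ * Phi p 1 ((n : ℝ) * s) := by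
  have hN : (0 : ℝ) < n := Nat.cast_pos.mpr hn
  have hNp : 0 < (n : ℝ) ^ p := rpow_pos_of_pos hN p
  have hcond (s : ℝ) : 1 / (n : ℝ) < |s| ↔ 1 < |n * s| := by
    rw [abs_mul, abs_of_pos hN, div_lt_iff₀ hN, mul_comm]
  funext s
  rw [Phi_one, Phi]
  beta_reduce
  by_cases h : 1 < |(n : ℝ) * s|
  · rw [if_pos ((hcond s).mpr h), if_pos h, abs_mul, abs_of_pos hN,
      mul_rpow hN.le (abs_nonneg s)]
    field_simp
  · rw [if_neg (mt (hcond s).mp h), if_neg h]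
    field_simp

theorem hasDerivAt_Phi_one {p : ℝ} (hp : 1 < p) (s : ℝ) :
    HasDerivAt (Phi p 1) (PhiOneDeriv p s) s := by
  have hquartic (t : ℝ) :
      HasDerivAt (fun t => p * (p - 2) / 8 * (t ^ 2 - 1) ^ 2 + p / 2 * (t ^ 2 - 1) + 1)
        (p * (p - 2) / 2 * (t ^ 2 - 1) * t + p * t) t := by
    have hsq := (hasDerivAt_pow 2 t).sub_const 1
    refine (((hsq.pow 2).const_mul _).add (hsq.const_mul _) |>.add_const 1).congr_deriv ?_
    simp only [Nat.cast_ofNat]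
    ring
  rw [Phi_one]
  refine hasDerivAt_ite_lt_abs one_pos (fun t ht => ?_) (fun t ht => ?_)
    (fun t _ => hquartic t) (fun t _ => hasDerivAt_abs_rpow t hp) s
  all_goals
    rw [sq_eq_one_of_abs_eq_one ht, ht, one_rpow]
    ring

theorem hasDerivAt_PhiOneDeriv (p s : ℝ) :
    HasDerivAt (PhiOneDeriv p) (PhiOneDeriv2 p s) s := by
  have hcubic (t : ℝ) : HasDerivAt (fun t => p * (p - 2) / 2 * (t ^ 2 - 1) * t + p * t)
      (p * (p - 2) / 2 * (3 * t ^ 2 - 1) + p) t := by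
    have hsq := (hasDerivAt_pow 2 t).sub_const 1
    refine (((hsq.const_mul _).mul (hasDerivAt_id t)).add
      ((hasDerivAt_id t).const_mul p)).congr_deriv ?_
    simp only [Nat.cast_ofNat, id]
    ring
  have hpow (t : ℝ) (ht : 1 ≤ |t|) :
      HasDerivAt (fun t => p * |t| ^ (p - 2) * t) (p * (p - 1) * |t| ^ (p - 2)) t := by
    have h := (hasDerivAt_abs_rpow_mul_self (p - 2) (abs_pos.mp (one_pos.trans_le ht))).const_mul p
    simp only [← mul_assoc] at h
    exact h.congr_deriv (by ring)
  refine hasDerivAt_ite_lt_abs one_pos (fun t ht => ?_) (fun t ht => ?_)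
    (fun t _ => hcubic t) hpow s
  all_goals
    rw [sq_eq_one_of_abs_eq_one ht, ht, one_rpow]
    ring

theorem PhiOneDeriv2_mem_Icc {p : ℝ} (hp1 : 1 ≤ p) (hp2 : p ≤ 2) (t : ℝ) :
    PhiOneDeriv2 p t ∈ Icc 0 (2 * p) := by
  unfold PhiOneDeriv2
  split_ifs with ht
  · have h0 : 0 ≤ |t| ^ (p - 2) := by positivity
    have h1 : |t| ^ (p - 2) ≤ 1 := rpow_le_one_of_one_le_of_nonpos ht.le (by linarith)
    have hc : 0 ≤ p * (p - 1) := by nlinarith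
    exact ⟨mul_nonneg hc h0, by nlinarith [mul_le_mul_of_nonneg_left h1 hc]⟩
  · have ht2 : t ^ 2 ≤ 1 := by
      rw [← sq_abs]
      nlinarith [abs_nonneg t]
    have hp : 0 ≤ p * (2 - p) := by nlinarith
    constructor
    · nlinarith [mul_nonneg hp (sub_nonneg.mpr ht2),
        mul_nonneg (by linarith : 0 ≤ p) (sub_nonneg.mpr hp1)]
    · nlinarith [mul_nonneg hp (sq_nonneg t), sq_nonneg p]

theorem stmt_2 (p : ℝ) (hp1 : 1 < p) (hp2 : p < 2) (n : ℕ) (hn : 0 < n) :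
    (∀ s : ℝ, 0 ≤ deriv (deriv (Phi p n)) s ∧
      deriv (deriv (Phi p n)) s ≤ 2 * p * (n : ℝ) ^ (2 - p)) ∧
    ConvexOn ℝ Set.univ (Phi p n) := by
  have hN : (0 : ℝ) < n := Nat.cast_pos.mpr hn
  set a : ℝ := ((n : ℝ) ^ p)⁻¹
  have hd1 (s : ℝ) : HasDerivAt (Phi p n) (a * n * PhiOneDeriv p (n * s)) s := by
    rw [Phi_eq_comp_mul hn]
    exact (hasDerivAt_Phi_one hp1 _).const_mul_comp_const_mul
  have hd2 (s : ℝ) : HasDerivAt (deriv (Phi p n)) (a * n * n * PhiOneDeriv2 p (n * s)) s := by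
    rw [funext fun s => (hd1 s).deriv]
    exact (hasDerivAt_PhiOneDeriv p _).const_mul_comp_const_mul
  have hscale : a * n * n = (n : ℝ) ^ (2 - p) := by
    rw [rpow_sub hN, rpow_two, div_eq_mul_inv]
    ring
  have hmem (s : ℝ) : deriv (deriv (Phi p n)) s ∈ Icc 0 (2 * p * (n : ℝ) ^ (2 - p)) := by
    obtain ⟨h0, h2p⟩ := PhiOneDeriv2_mem_Icc hp1.le hp2.le (n * s)
    have hpos : 0 < (n : ℝ) ^ (2 - p) := by positivity
    rw [(hd2 s).deriv, hscale]
    exact ⟨mul_nonneg hpos.le h0, by nlinarith⟩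
  exact ⟨hmem, convexOn_univ_of_deriv2_nonneg (fun s => (hd1 s).differentiableAt)
    (fun s => (hd2 s).differentiableAt) fun s => (hmem s).1⟩
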